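/- For a partition λ with empty k-core, the sign σ_λ := (-1)^{ht(t)} is independent of the chosen sequence t of k-rim hook removals reducing λ to the empty partition, where ht(t) is the sum of the heights of the removed rim hooks. -/

import Mathlib

open scoped Classical

/-- A function `ℕ → ℕ` representing a partition: weakly decreasing and eventually zero.
Row `i` (0-indexed) has `lam i` boxes. -/
def IsPartitionFun (lam : ℕ → ℕ) : Prop :=
  Antitone lam ∧ ∃ N, ∀ i ≥ N, lam i = 0

/-- The size `|λ|` of a partition function. -/
noncomputable def msize (lam : ℕ → ℕ) : ℕ := ∑ᶠ i, lam i

/-- The cells of the skew shape `λ − μ`. -/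
def skewCells (lam mu : ℕ → ℕ) : Set (ℕ × ℕ) :=
  {c | mu c.1 ≤ c.2 ∧ c.2 < lam c.1}

/-- Two cells are adjacent if they share an edge. -/
def AdjCell (c d : ℕ × ℕ) : Prop :=
  (c.1 = d.1 ∧ (c.2 + 1 = d.2 ∨ d.2 + 1 = c.2)) ∨
  (c.2 = d.2 ∧ (c.1 + 1 = d.1 ∨ d.1 + 1 = c.1))

/-- A set of cells is (edge-)connected. -/
def CellConnected (S : Set (ℕ × ℕ)) : Prop :=
  ∀ c ∈ S, ∀ d ∈ S, Relation.ReflTransGen (fun x y => x ∈ S ∧ y ∈ S ∧ AdjCell x y) c d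

/-- A set of cells contains no 2×2 block. -/
def NoSquare (S : Set (ℕ × ℕ)) : Prop :=
  ¬ ∃ i j : ℕ, (i, j) ∈ S ∧ (i + 1, j) ∈ S ∧ (i, j + 1) ∈ S ∧ (i + 1, j + 1) ∈ S

/-- `λ − μ` is a rim hook (border strip) of size `m`: both are partitions, `μ ⊆ λ`,
and the skew shape has `m` cells, is connected and contains no 2×2 block. -/
def IsRimHook (lam mu : ℕ → ℕ) (m : ℕ) : Prop :=
  IsPartitionFun lam ∧ IsPartitionFun mu ∧ (∀ i, mu i ≤ lam i) ∧
  (skewCells lam mu).ncard = m ∧ CellConnected (skewCells lam mu) ∧ NoSquare (skewCells lam mu)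

/-- The height of the skew shape `λ − μ`: one less than the number of occupied rows. -/
noncomputable def heightOf (lam mu : ℕ → ℕ) : ℕ := {i | mu i < lam i}.ncard - 1

/-- The irreducible character value `χ^λ_ρ` of the symmetric group, presented through
the (iterated) Murnaghan–Nakayama rule: remove rim hooks of sizes `ρ₁, ρ₂, …` in turn. -/
noncomputable def charMN : List ℕ → (ℕ → ℕ) → ℤ
  | [], lam => if ∀ i, lam i = 0 then 1 else 0
  | r :: rho, lam =>
      ∑ᶠ mu : {mu : ℕ → ℕ // IsRimHook lam mu r},
        (-1) ^ heightOf lam mu.1 * charMN rho mu.1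

/-- A list is a partition of `n`: weakly decreasing, positive parts, summing to `n`. -/
def IsPartitionList (rho : List ℕ) (n : ℕ) : Prop :=
  rho.Pairwise (· ≥ ·) ∧ (∀ r ∈ rho, 0 < r) ∧ rho.sum = n

/-- `Reduces k lam ε`: the partition `lam` can be reduced to the empty partition by
successive removals of `k`-rim hooks, with total sign `ε = (-1)^{sum of heights}`. -/
inductive Reduces (k : ℕ) : (ℕ → ℕ) → ℤ → Prop
  | nil : Reduces k (fun _ => 0) 1
  | cons {lam mu : ℕ → ℕ} {ε : ℤ} (h : IsRimHook lam mu k) (hr : Reduces k mu ε) :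
      Reduces k lam ((-1) ^ heightOf lam mu * ε)

/-!
Encode a partition `λ` with at most `N` rows by its beta-set `β(λ)` of beads `λ i + (N - i)`,
`i < N`, and let `inv β` count the pairs of beads `x < y` with `y % k < x % k`. Removing a
`k`-rim hook that occupies rows `r₁, …, r₂` moves the bead `λ r₁ + (N - r₁)` down by exactly `k`
to the hole `μ r₂ + (N - r₂)`, jumping over the `r₂ - r₁ = ht` beads of rows `r₁ + 1, …, r₂`.
The moving bead keeps its residue, and a jumped bead has a different one (it lies strictly between
two positions `k` apart), so `inv` changes parity once per jumped bead and never otherwise. Hence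
every reduction of `λ` has sign `(-1) ^ (inv β(λ) + inv β(∅))`.
-/

open Finset

def ResidueInverted (k x y : ℕ) : Prop := x < y ∧ y % k < x % k

instance (k x y : ℕ) : Decidable (ResidueInverted k x y) := inferInstanceAs (Decidable (_ ∧ _))

def residueInv (k : ℕ) (B : Finset ℕ) : ℕ := #{p ∈ B ×ˢ B | ResidueInverted k p.1 p.2}

lemma residueInv_eq_sum (k : ℕ) (B : Finset ℕ) :
    residueInv k B = ∑ x ∈ B, ∑ y ∈ B, if ResidueInverted k x y then 1 else 0 := by
  rw [residueInv, card_filter, sum_product]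

lemma residueInv_insert {k a : ℕ} {C : Finset ℕ} (ha : a ∉ C) :
    residueInv k (insert a C) =
      residueInv k C + #{y ∈ C | ResidueInverted k a y ∨ ResidueInverted k y a} := by
  have h_irrefl : ¬ ResidueInverted k a a := fun h => (lt_irrefl a) h.1
  have h_exclusive (y : ℕ) :
      ((if ResidueInverted k a y then 1 else 0) + if ResidueInverted k y a then 1 else 0) =
        if ResidueInverted k a y ∨ ResidueInverted k y a then 1 else 0 := by
    have : ¬ (ResidueInverted k a y ∧ ResidueInverted k y a) := by unfold ResidueInverted; omega
    by_cases ResidueInverted k a y <;> by_cases ResidueInverted k y a <;> simp_all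
  simp only [residueInv_eq_sum, sum_insert ha, card_filter, if_neg h_irrefl, sum_add_distrib,
    ← h_exclusive]
  ring

lemma residueInverted_xor {k b c y : ℕ} (hbc : c + k = b) (hyc : y ≠ c) (hyb : y ≠ b) :
    (ResidueInverted k b y ∨ ResidueInverted k y b) ↔
      Xor (ResidueInverted k c y ∨ ResidueInverted k y c) (c < y ∧ y < b) := by
  have hb : b % k = c % k := by rw [← hbc, Nat.add_mod_right]
  have hy : c < y → y < b → y % k ≠ c % k := fun h₁ h₂ he => by
    have := Nat.le_of_dvd (by omega) ((Nat.modEq_iff_dvd' h₁.le).mp he.symm)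
    omega
  unfold ResidueInverted Xor
  rw [hb]
  generalize y % k = r at *
  generalize c % k = s at *
  omega

lemma natCast_card_filter_xor {ι : Type*} (s : Finset ι) (p q : ι → Prop) [DecidablePred p]
    [DecidablePred q] :
    (#{i ∈ s | Xor (p i) (q i)} : ZMod 2) = #{i ∈ s | p i} + #{i ∈ s | q i} := by
  simp only [card_filter, Nat.cast_sum, ← sum_add_distrib]
  refine sum_congr rfl fun i _ => ?_
  by_cases p i <;> by_cases q i <;> simp_all [Xor]
  decide

lemma residueInv_insert_erase {k b c : ℕ} {B : Finset ℕ} (hbc : c + k = b) (hb : b ∈ B)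
    (hc : c ∉ B) :
    (residueInv k B : ZMod 2) =
      residueInv k (insert c (B.erase b)) + #{y ∈ B | c < y ∧ y < b} := by
  have h_between : #{y ∈ B | c < y ∧ y < b} = #{y ∈ B.erase b | c < y ∧ y < b} := by
    rw [filter_erase, erase_eq_of_notMem (by simp)]
  have h_cross : {y ∈ B.erase b | ResidueInverted k b y ∨ ResidueInverted k y b} =
      {y ∈ B.erase b | Xor (ResidueInverted k c y ∨ ResidueInverted k y c) (c < y ∧ y < b)} :=
    filter_congr fun y hy => residueInverted_xor hbc (by rintro rfl; exact hc (mem_of_mem_erase hy))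
      (ne_of_mem_erase hy)
  conv_lhs => rw [← insert_erase hb]
  rw [residueInv_insert (notMem_erase b B), residueInv_insert (fun h => hc (mem_of_mem_erase h)),
    h_cross, Nat.cast_add, natCast_card_filter_xor, h_between]
  push_cast
  ring

lemma exists_vertical_of_reflTransGen {S : Set (ℕ × ℕ)} {c d : ℕ × ℕ}
    (hp : Relation.ReflTransGen (fun x y => x ∈ S ∧ y ∈ S ∧ AdjCell x y) c d) {i : ℕ}
    (hci : c.1 ≤ i) (hid : i < d.1) : ∃ j, (i, j) ∈ S ∧ (i + 1, j) ∈ S := by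
  induction hp with
  | refl => omega
  | @tail e f _ hef ih =>
    by_cases hie : i < e.1
    · exact ih hie
    · obtain ⟨he, hf, hadj⟩ := hef
      have he' : (i, e.2) = e := Prod.ext (by unfold AdjCell at hadj; omega) rfl
      have hf' : (i + 1, e.2) = f := by ext <;> (unfold AdjCell at hadj; omega)
      exact ⟨e.2, he' ▸ he, hf' ▸ hf⟩

@[simp]
lemma mem_skewCells {lam mu : ℕ → ℕ} {i j : ℕ} : (i, j) ∈ skewCells lam mu ↔ mu i ≤ j ∧ j < lam i :=
  Iff.rfl

lemma succ_le_of_noSquare {lam mu : ℕ → ℕ} (hlam : Antitone lam) (hmu : Antitone mu)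
    (h : NoSquare (skewCells lam mu)) (i : ℕ) : lam (i + 1) ≤ mu i + 1 := by
  by_contra! hlt
  have := hlam (Nat.le_add_right i 1)
  have := hmu (Nat.le_add_right i 1)
  exact h ⟨i, mu i, by simp only [mem_skewCells]; omega⟩

-- Consecutive rows of the strip overlap in exactly one column: `lam (i + 1) = mu i + 1`.
structure IsBorderStrip (lam mu : ℕ → ℕ) (r₁ r₂ : ℕ) : Prop where
  le : r₁ ≤ r₂
  lt_inside : ∀ i, r₁ ≤ i → i ≤ r₂ → mu i < lam i
  succ_eq : ∀ i, r₁ ≤ i → i < r₂ → lam (i + 1) = mu i + 1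
  eq_outside : ∀ i, i < r₁ ∨ r₂ < i → mu i = lam i

lemma IsRimHook.exists_isBorderStrip {lam mu : ℕ → ℕ} {k : ℕ} (h : IsRimHook lam mu k)
    (hk : 0 < k) : ∃ r₁ r₂, IsBorderStrip lam mu r₁ r₂ := by
  obtain ⟨⟨hlam, N, hN⟩, ⟨hmu, -⟩, hle, hcard, hconn, hsq⟩ := h
  set R := {i | mu i < lam i}
  have hR_bdd : BddAbove R :=
    ⟨N, fun i hi => by by_contra! hiN; have := hN i hiN.le; simp_all [R]⟩
  have hR_ne : R.Nonempty := by
    obtain ⟨c, hc⟩ := Set.nonempty_of_ncard_ne_zero (hcard ▸ hk.ne')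
    exact ⟨c.1, show mu c.1 < lam c.1 from hc.1.trans_lt hc.2⟩
  have hr₁ : sInf R ∈ R := Nat.sInf_mem hR_ne
  have hr₂ : sSup R ∈ R := Nat.sSup_mem hR_ne hR_bdd
  have h_vertical : ∀ i, sInf R ≤ i → i < sSup R →
      ∃ j, (i, j) ∈ skewCells lam mu ∧ (i + 1, j) ∈ skewCells lam mu := fun i h₁ h₂ =>
    exists_vertical_of_reflTransGen
      (hconn (sInf R, mu (sInf R)) ⟨le_rfl, hr₁⟩ (sSup R, mu (sSup R)) ⟨le_rfl, hr₂⟩) h₁ h₂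
  refine ⟨sInf R, sSup R, le_csSup hR_bdd hr₁, fun i h₁ h₂ => ?_, fun i h₁ h₂ => ?_,
    fun i hi => ?_⟩
  · rcases h₂.lt_or_eq with h₂ | rfl
    · obtain ⟨j, hj, -⟩ := h_vertical i h₁ h₂
      exact hj.1.trans_lt hj.2
    · exact hr₂
  · obtain ⟨j, hj, hj'⟩ := h_vertical i h₁ h₂
    have := succ_le_of_noSquare hlam hmu hsq i
    exact le_antisymm this (hj.1.trans_lt hj'.2)
  · have : i ∉ R := fun hiR => by
      rcases hi with hi | hi
      · exact (Nat.sInf_le hiR).not_gt hi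
      · exact (le_csSup hR_bdd hiR).not_gt hi
    exact le_antisymm (hle i) (not_lt.mp this)

lemma ncard_skewCells_eq_sum {lam mu : ℕ → ℕ} (s : Finset ℕ) (hs : ∀ i ∉ s, lam i ≤ mu i) :
    (skewCells lam mu).ncard = ∑ i ∈ s, (lam i - mu i) := by
  have h_eq : skewCells lam mu = ↑(s.biUnion fun i => {i} ×ˢ Ico (mu i) (lam i)) := by
    ext ⟨i, j⟩
    simp only [mem_skewCells, coe_biUnion, mem_coe, Set.mem_iUnion, mem_product, mem_singleton,
      mem_Ico, exists_prop]
    refine ⟨fun h => ⟨i, ?_, rfl, h⟩, fun ⟨_, _, rfl, h⟩ => h⟩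
    by_contra hi
    have := hs i hi
    omega
  rw [h_eq, Set.ncard_coe_finset, card_biUnion fun x _ y _ hxy =>
    disjoint_product.2 (Or.inl (disjoint_singleton.2 hxy))]
  simp

def betaSet (N : ℕ) (lam : ℕ → ℕ) : Finset ℕ := (range N).image fun i => lam i + (N - i)

lemma mem_betaSet {N a : ℕ} {lam : ℕ → ℕ} : a ∈ betaSet N lam ↔ ∃ i < N, lam i + (N - i) = a := by
  simp [betaSet]

lemma strictAntiOn_bead {lam : ℕ → ℕ} (hlam : Antitone lam) (N : ℕ) :
    StrictAntiOn (fun i => lam i + (N - i)) (Set.Iic N) := fun i _ j hj hij => by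
  have := hlam hij.le
  simp only [Set.mem_Iic] at hj
  show lam j + (N - j) < lam i + (N - i)
  omega

namespace IsBorderStrip

variable {lam mu : ℕ → ℕ} {r₁ r₂ N : ℕ} (hs : IsBorderStrip lam mu r₁ r₂)
include hs

lemma setOf_lt_eq_Icc : {i | mu i < lam i} = Set.Icc r₁ r₂ := by
  ext i
  refine ⟨fun hi => ?_, fun hi => hs.lt_inside i hi.1 hi.2⟩
  by_contra hi'
  rw [Set.mem_Icc, not_and_or, not_le, not_le] at hi'
  exact hi.ne (hs.eq_outside i hi')

lemma heightOf_eq : heightOf lam mu = r₂ - r₁ := by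
  rw [heightOf, hs.setOf_lt_eq_Icc, ← coe_Icc, Set.ncard_coe_finset, Nat.card_Icc]
  omega

lemma ncard_skewCells_add : (skewCells lam mu).ncard + mu r₂ + r₁ = lam r₁ + r₂ := by
  have h_sum := ncard_skewCells_eq_sum (lam := lam) (mu := mu) (Icc r₁ r₂) (fun i hi => by
    rw [mem_Icc, not_and_or, not_le, not_le] at hi
    exact (hs.eq_outside i hi).ge)
  have h_row (i : ℕ) (h₁ : r₁ ≤ i) (h₂ : i < r₂) :
      ((lam i - mu i : ℕ) : ℤ) = -((lam (i + 1) : ℤ) - lam i) + 1 := by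
    have := hs.succ_eq i h₁ h₂
    have := hs.lt_inside i h₁ h₂.le
    omega
  have h_int : ((skewCells lam mu).ncard : ℤ) =
      ∑ i ∈ Ico r₁ r₂, (-((lam (i + 1) : ℤ) - lam i) + 1) + ((lam r₂ - mu r₂ : ℕ) : ℤ) := by
    rw [h_sum, ← Ico_add_one_right_eq_Icc, sum_Ico_succ_top (by have := hs.le; omega),
      Nat.cast_add, Nat.cast_sum]
    congr 1
    exact sum_congr rfl fun i hi => h_row i (mem_Ico.1 hi).1 (mem_Ico.1 hi).2
  rw [sum_add_distrib, sum_neg_distrib, sum_Ico_sub (fun i => (lam i : ℤ)) hs.le, sum_const,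
    Nat.card_Ico] at h_int
  have := hs.le
  have := hs.lt_inside r₂ hs.le le_rfl
  simp only [nsmul_eq_mul, mul_one] at h_int
  omega

lemma lt_of_eventually_zero (hN : ∀ i, N ≤ i → lam i = 0) : r₂ < N := by
  by_contra! h
  have := hs.lt_inside r₂ hs.le le_rfl
  have := hN r₂ h
  omega

lemma hole_lt_bead (hlam : Antitone lam) {i : ℕ} (hi : i ≤ r₂) :
    mu r₂ + (N - r₂) < lam i + (N - i) := by
  have := hs.lt_inside r₂ hs.le le_rfl
  have := hlam hi
  omega

lemma bead_lt_hole (hmu : Antitone mu) {i : ℕ} (hi : r₂ < i) (hiN : i < N) :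
    lam i + (N - i) < mu r₂ + (N - r₂) := by
  have := hs.eq_outside i (Or.inr hi)
  have := hmu hi.le
  omega

lemma notMem_betaSet (hlam : Antitone lam) (hmu : Antitone mu) :
    mu r₂ + (N - r₂) ∉ betaSet N lam := by
  rw [mem_betaSet]
  rintro ⟨i, hiN, hi⟩
  rcases le_or_gt i r₂ with h | h
  · exact (hs.hole_lt_bead hlam h).ne' hi
  · exact (hs.bead_lt_hole hmu h hiN).ne hi

lemma betaSet_eq (hN : ∀ i, N ≤ i → lam i = 0) (hlam : Antitone lam) :
    betaSet N mu = insert (mu r₂ + (N - r₂)) ((betaSet N lam).erase (lam r₁ + (N - r₁))) := by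
  have hr₂ := hs.lt_of_eventually_zero hN
  have h_ne (j : ℕ) (hjN : j < N) (hj : j ≠ r₁) : lam j + (N - j) ≠ lam r₁ + (N - r₁) :=
    fun h => hj ((strictAntiOn_bead hlam N).injOn (Set.mem_Iic.2 hjN.le)
      (Set.mem_Iic.2 (hs.le.trans_lt hr₂).le) h)
  have h_outside (i : ℕ) (hi : i < r₁ ∨ r₂ < i) : mu i + (N - i) = lam i + (N - i) := by
    rw [hs.eq_outside i hi]
  have h_shift (i : ℕ) (h₁ : r₁ ≤ i) (h₂ : i < r₂) :
      mu i + (N - i) = lam (i + 1) + (N - (i + 1)) := by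
    have := hs.succ_eq i h₁ h₂
    omega
  ext a
  simp only [mem_insert, mem_erase, mem_betaSet]
  constructor
  · rintro ⟨i, hiN, rfl⟩
    rcases lt_or_ge i r₁ with h₁ | h₁
    · exact .inr ⟨h_outside i (.inl h₁) ▸ h_ne i hiN h₁.ne, i, hiN, (h_outside i (.inl h₁)).symm⟩
    rcases lt_trichotomy i r₂ with h₂ | rfl | h₂
    · exact .inr ⟨h_shift i h₁ h₂ ▸ h_ne (i + 1) (by omega) (by omega), i + 1, by omega,
        (h_shift i h₁ h₂).symm⟩
    · exact .inl rfl
    · exact .inr ⟨h_outside i (.inr h₂) ▸ h_ne i hiN (by have := hs.le; omega), i, hiN,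
        (h_outside i (.inr h₂)).symm⟩
  · rintro (rfl | ⟨hne, i, hiN, rfl⟩)
    · exact ⟨r₂, hr₂, rfl⟩
    have hi : i ≠ r₁ := by rintro rfl; exact hne rfl
    by_cases h : r₁ < i ∧ i ≤ r₂
    · refine ⟨i - 1, by omega, ?_⟩
      rw [h_shift (i - 1) (by omega) (by omega), Nat.sub_add_cancel (by omega)]
    · exact ⟨i, hiN, h_outside i (by omega)⟩

lemma card_filter_betaSet (hN : ∀ i, N ≤ i → lam i = 0) (hlam : Antitone lam)
    (hmu : Antitone mu) :
    #{y ∈ betaSet N lam | mu r₂ + (N - r₂) < y ∧ y < lam r₁ + (N - r₁)} = r₂ - r₁ := by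
  have hr₂ := hs.lt_of_eventually_zero hN
  have h_anti := strictAntiOn_bead hlam N
  have h_filter : {i ∈ range N | mu r₂ + (N - r₂) < lam i + (N - i) ∧
      lam i + (N - i) < lam r₁ + (N - r₁)} = Ioc r₁ r₂ := by
    ext i
    simp only [mem_filter, mem_range, mem_Ioc]
    constructor
    · rintro ⟨hiN, h_hole, h_bead⟩
      have hr₁N : r₁ ≤ N := by have := hs.le; omega
      refine ⟨(h_anti.lt_iff_gt (Set.mem_Iic.2 hiN.le) (Set.mem_Iic.2 hr₁N)).1 h_bead, ?_⟩
      by_contra! h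
      exact (hs.bead_lt_hole hmu h hiN).not_gt h_hole
    · rintro ⟨h₁, h₂⟩
      exact ⟨by omega, hs.hole_lt_bead hlam h₂,
        h_anti (Set.mem_Iic.2 (by omega)) (Set.mem_Iic.2 (by omega)) h₁⟩
  rw [betaSet, filter_image, h_filter, card_image_of_injOn, Nat.card_Ioc]
  exact h_anti.injOn.mono fun i hi =>
    Set.mem_Iic.2 (by simp only [coe_Ioc, Set.mem_Ioc] at hi; omega)

end IsBorderStrip

lemma IsRimHook.residueInv_betaSet {lam mu : ℕ → ℕ} {k N : ℕ} (h : IsRimHook lam mu k)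
    (hk : 0 < k) (hN : ∀ i, N ≤ i → lam i = 0) :
    (residueInv k (betaSet N lam) : ZMod 2) = residueInv k (betaSet N mu) + heightOf lam mu := by
  obtain ⟨r₁, r₂, hs⟩ := h.exists_isBorderStrip hk
  obtain ⟨⟨hlam, -⟩, ⟨hmu, -⟩, -, hcard, -⟩ := h
  have hr₁₂ := hs.le
  have hr₂ := hs.lt_of_eventually_zero hN
  have h_move : mu r₂ + (N - r₂) + k = lam r₁ + (N - r₁) := by
    have := hs.ncard_skewCells_add
    omega
  rw [residueInv_insert_erase h_move (mem_betaSet.2 ⟨r₁, by omega, rfl⟩)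
      (hs.notMem_betaSet hlam hmu),
    ← hs.betaSet_eq hN hlam, hs.card_filter_betaSet hN hlam hmu, hs.heightOf_eq]

lemma neg_one_pow_eq_of_natCast_eq {m n : ℕ} (h : (m : ZMod 2) = n) : (-1 : ℤ) ^ m = (-1) ^ n := by
  rw [neg_one_pow_eq_pow_mod_two, (ZMod.natCast_eq_natCast_iff' m n 2).1 h,
    ← neg_one_pow_eq_pow_mod_two]

lemma Reduces.eq_neg_one_pow {k N : ℕ} {lam : ℕ → ℕ} {ε : ℤ} (h : Reduces k lam ε) (hk : 0 < k)
    (hN : ∀ i, N ≤ i → lam i = 0) :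
    ε = (-1) ^ (residueInv k (betaSet N lam) + residueInv k (betaSet N fun _ => 0)) := by
  induction h with
  | nil => rw [← two_mul, pow_mul, neg_one_sq, one_pow]
  | @cons lam mu ε hhook _ ih =>
    rw [ih fun i hi => by have := hhook.2.2.1 i; have := hN i hi; omega, ← pow_add]
    apply neg_one_pow_eq_of_natCast_eq
    push_cast
    rw [hhook.residueInv_betaSet hk hN]
    ring

/-- For a partition `λ` with empty `k`-core, the sign `σ_λ = (-1)^{ht(t)}` is independent
of the chosen sequence `t` of `k`-rim hook removals reducing `λ` to the empty partition. -/
theorem sign_well_defined (k : ℕ) (hk : 1 ≤ k) (lam : ℕ → ℕ) (hlam : IsPartitionFun lam)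
    (ε ε' : ℤ) (h : Reduces k lam ε) (h' : Reduces k lam ε') : ε = ε' := by
  obtain ⟨-, N, hN⟩ := hlam
  rw [h.eq_neg_one_pow hk hN, h'.eq_neg_one_pow hk hN]
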